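/- arXiv:1607.07533 — 5 statements merged into one kernel-verified Lean document; each statement's English description precedes it below -/
import Mathlib

section
/- Let s ∈ {−1, 1}, l > 0, κ > 0. Let ρ, M : (0,∞) → ℝ and suppose M is differentiable on (0,∞) with M′(r) = 2π²r³ρ(r) for all r > 0. For r > 0 set W(r) = r⁴/l⁴ + s·κ·M(r)/(6π²l²) and assume W(r) > 0, and define u(r) = 1 + s·r²/l² − s·√W(r). Then u is differentiable at every r > 0 and satisfies −u′(r)/(2r) + (1 − u(r))/r² − s·l²·u′(r)·(1 − u(r))/(2r³) = κ·ρ(r)/12. -/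
open Real

/-!
Write `q = √W` and `a = r²/l²`, so that `1 - u = s (q - a)`. Because `s² = 1`, the factor
`1 + s l² (1 - u) / r²` multiplying `-u'/(2r)` collapses to `q / a`, the terms in `q` cancel,
and the left-hand side reduces to `s l² W' / (4 r³) - s / l²`. The Chern–Simons mass term of `W'`,
coming from `M' = 2π² r³ ρ`, then contributes exactly `κ ρ / 12`.
-/

theorem hasDerivAt_one_add_sq_div_sub_sqrt {W : ℝ → ℝ} {W' s l r : ℝ}
    (hW : HasDerivAt W W' r) (hWr : W r ≠ 0) :
    HasDerivAt (fun x => 1 + s * x ^ 2 / l ^ 2 - s * √(W x))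
      (s * (2 * r / l ^ 2 - W' / (2 * √(W r)))) r := by
  have hsq : HasDerivAt (fun x : ℝ => x ^ 2) (2 * r) r := by
    simpa using hasDerivAt_pow 2 r
  exact ((((hsq.const_mul s).div_const (l ^ 2)).const_add 1).sub
    ((hW.sqrt hWr).const_mul s)).congr_deriv (by ring)

theorem field_equation_lhs_eq {s l r q W' : ℝ} (hs : s ^ 2 = 1) (hl : l ≠ 0) (hr : r ≠ 0)
    (hq : q ≠ 0) :
    -(s * (2 * r / l ^ 2 - W' / (2 * q))) / (2 * r)
        + (1 - (1 + s * r ^ 2 / l ^ 2 - s * q)) / r ^ 2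
        - s * l ^ 2 * (s * (2 * r / l ^ 2 - W' / (2 * q)))
          * (1 - (1 + s * r ^ 2 / l ^ 2 - s * q)) / (2 * r ^ 3)
      = s * l ^ 2 * W' / (4 * r ^ 3) - s / l ^ 2 := by
  field_simp
  linear_combination
    -4 * s * (4 * r * q ^ 2 * l ^ 2 + r ^ 2 * l ^ 2 * W' - 4 * r ^ 3 * q - q * l ^ 4 * W') * hs

theorem stmt_0_general (s l κ : ℝ) (hs : s = 1 ∨ s = -1) (hl : 0 < l)
    (ρ M W u : ℝ → ℝ)
    (hM : ∀ r > (0 : ℝ), HasDerivAt M (2 * π ^ 2 * r ^ 3 * ρ r) r)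
    (hW : ∀ r : ℝ, W r = r ^ 4 / l ^ 4 + s * κ * M r / (6 * π ^ 2 * l ^ 2))
    (hWpos : ∀ r > (0 : ℝ), 0 < W r)
    (hu : ∀ r : ℝ, u r = 1 + s * r ^ 2 / l ^ 2 - s * Real.sqrt (W r)) :
    ∀ r > (0 : ℝ), DifferentiableAt ℝ u r ∧
      -(deriv u r) / (2 * r) + (1 - u r) / r ^ 2
        - s * l ^ 2 * (deriv u r) * (1 - u r) / (2 * r ^ 3) = κ * ρ r / 12 := by
  intro r hr
  have hs2 : s ^ 2 = 1 := by rcases hs with rfl | rfl <;> norm_num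
  have hW' : HasDerivAt W
      (4 * r ^ 3 / l ^ 4 + s * κ * (2 * π ^ 2 * r ^ 3 * ρ r) / (6 * π ^ 2 * l ^ 2)) r := by
    have hpow : HasDerivAt (fun x : ℝ => x ^ 4) (4 * r ^ 3) r := by
      simpa using hasDerivAt_pow 4 r
    exact ((hpow.div_const _).add (((hM r hr).const_mul (s * κ)).div_const _))
      |>.congr_of_eventuallyEq (.of_forall hW)
  have hu' := (hasDerivAt_one_add_sq_div_sub_sqrt hW' (hWpos r hr).ne').congr_of_eventuallyEq
    (.of_forall hu)
  refine ⟨hu'.differentiableAt, ?_⟩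
  rw [hu'.deriv, hu r, field_equation_lhs_eq hs2 hl.ne' hr.ne' (sqrt_pos.mpr (hWpos r hr)).ne']
  field_simp
  linear_combination 24 * κ * ρ r * l ^ 2 * hs2

/-- Interior field equation (36′) of Einstein–Chern–Simons gravity for the
metric function `u(r) = e^{−2g(r)}` given by the solution (42′). -/
theorem stmt_0 (s l κ : ℝ) (hs : s = 1 ∨ s = -1) (hl : 0 < l) (hκ : 0 < κ)
    (ρ M W u : ℝ → ℝ)
    (hM : ∀ r > (0 : ℝ), HasDerivAt M (2 * π ^ 2 * r ^ 3 * ρ r) r)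
    (hW : ∀ r : ℝ, W r = r ^ 4 / l ^ 4 + s * κ * M r / (6 * π ^ 2 * l ^ 2))
    (hWpos : ∀ r > (0 : ℝ), 0 < W r)
    (hu : ∀ r : ℝ, u r = 1 + s * r ^ 2 / l ^ 2 - s * Real.sqrt (W r)) :
    ∀ r > (0 : ℝ), DifferentiableAt ℝ u r ∧
      -(deriv u r) / (2 * r) + (1 - u r) / r ^ 2
        - s * l ^ 2 * (deriv u r) * (1 - u r) / (2 * r ^ 3) = κ * ρ r / 12 :=
  stmt_0_general s l κ hs hl ρ M W u hM hW hWpos hu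
end

section
/- Let s ∈ {−1, 1}, l > 0, κ > 0, r > 0, M > 0, ρ ≠ 0, and p ∈ ℝ. Assume 1 + s·κ·l²·M/(6π²r⁴) > 0 and set A = √(1 + s·κ·l²·M/(6π²r⁴)) and u = 1 + s·(r²/l²)·(1 − A), and assume u ≠ 0. Then u = 1 + s·r²/l² − s·√(r⁴/l⁴ + s·κ·M/(6π²l²)), and moreover −s·(ρ + p)·(κ·p·r³ + 12·r·(1 − u)) / (12·l²·u·(1 − u + s·r²/l²)) = −(κ·M·ρ/(12π²r³))·(1 + p/ρ)·A^{−1}·[π²r⁴p/M − (12·s·π²r⁴/(κ·l²·M))·(1 − A)]·[1 + s·(r²/l²)·(1 − A)]^{−1}. -/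
set_option maxHeartbeats 1000000


open Real

/-- Derivation of the generalized five-dimensional TOV equation (se13):
substituting the metric function `u = e^{−2g(r)}` of (42′) into the
pressure-gradient expression (se11) yields the right-hand side of (se13). -/
theorem stmt_2 (s l κ r M ρ p : ℝ) (hs : s = 1 ∨ s = -1) (hl : 0 < l)
    (hκ : 0 < κ) (hr : 0 < r) (hM : 0 < M) (hρ : ρ ≠ 0)
    (hpos : 0 < 1 + s * κ * l ^ 2 * M / (6 * π ^ 2 * r ^ 4))
    (A : ℝ) (hA : A = Real.sqrt (1 + s * κ * l ^ 2 * M / (6 * π ^ 2 * r ^ 4)))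
    (u : ℝ) (hu : u = 1 + s * (r ^ 2 / l ^ 2) * (1 - A)) (hu0 : u ≠ 0) :
    u = 1 + s * r ^ 2 / l ^ 2
        - s * Real.sqrt (r ^ 4 / l ^ 4 + s * κ * M / (6 * π ^ 2 * l ^ 2)) ∧
    -s * (ρ + p) * (κ * p * r ^ 3 + 12 * r * (1 - u)) /
        (12 * l ^ 2 * u * (1 - u + s * r ^ 2 / l ^ 2)) =
      -(κ * M * ρ / (12 * π ^ 2 * r ^ 3)) * (1 + p / ρ) * A⁻¹ *
        (π ^ 2 * r ^ 4 * p / M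
          - 12 * s * π ^ 2 * r ^ 4 / (κ * l ^ 2 * M) * (1 - A)) *
        (1 + s * (r ^ 2 / l ^ 2) * (1 - A))⁻¹ := by
  have hπ : (π : ℝ) ≠ 0 := Real.pi_ne_zero
  have hl0 : l ≠ 0 := ne_of_gt hl
  have hr0 : r ≠ 0 := ne_of_gt hr
  have hM0 : M ≠ 0 := ne_of_gt hM
  have hκ0 : κ ≠ 0 := ne_of_gt hκ
  have hs2 : s ^ 2 = 1 := by rcases hs with h | h <;> rw [h] <;> ring
  have hA0 : 0 < A := hA ▸ Real.sqrt_pos.2 hpos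
  have hAsq : A ^ 2 = 1 + s * κ * l ^ 2 * M / (6 * π ^ 2 * r ^ 4) := by
    rw [hA, sq_sqrt hpos.le]
  have hsqrt : Real.sqrt (r ^ 4 / l ^ 4 + s * κ * M / (6 * π ^ 2 * l ^ 2))
      = r ^ 2 / l ^ 2 * A := by
    have h1 : r ^ 4 / l ^ 4 + s * κ * M / (6 * π ^ 2 * l ^ 2)
        = (r ^ 2 / l ^ 2 * A) ^ 2 := by
      rw [mul_pow, hAsq]; field_simp
    rw [h1, Real.sqrt_sq (by positivity)]
  constructor
  · rw [hu, hsqrt]; ring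
  · have hs0 : s ≠ 0 := by rcases hs with h | h <;> rw [h] <;> norm_num
    have hA0' : A ≠ 0 := ne_of_gt hA0
    have h1 : κ * p * r ^ 3 + 12 * r * (1 - u)
        = κ * p * r ^ 3 - 12 * s * r * (r ^ 2 / l ^ 2) * (1 - A) := by
      rw [hu]; ring
    have h2 : 12 * l ^ 2 * u * (1 - u + s * r ^ 2 / l ^ 2)
        = 12 * s * r ^ 2 * A * u := by
      rw [hu]; field_simp; ring
    rw [h1, h2, ← hu]
    rcases hs with h | h <;> subst h <;> field_simp <;> ring
end

section
/- Fix s ∈ {−1, 1}, κ > 0, r > 0, M > 0, ρ > 0, and p ∈ ℝ with 1 − κ·M/(12π²r²) ≠ 0. For l > 0 define A(l) = √(1 + s·κ·l²·M/(6π²r⁴)) and G(l) = −(κ·M·ρ/(12π²r³))·(1 + p/ρ)·A(l)^{−1}·[π²r⁴p/M − (12·s·π²r⁴/(κ·l²·M))·(1 − A(l))]·[1 + s·(r²/l²)·(1 − A(l))]^{−1}. Then as l → 0⁺, G(l) tends to −(κ·M·ρ/(12π²r³))·(1 + p/ρ)·(1 + π²r⁴p/M)·(1 − κ·M/(12π²r²))^{−1}.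 -/
/-!
Put `c = s κ M / (6 π² r⁴)`, so that `A(l) = √(1 + c l²)`. Then `G(l)` is a continuous expression
in `A(l)` and `f(l) = (1 - A(l)) / l²`, and rationalising the numerator gives
`f(l) = -c / (1 + A(l)) → -c / 2`. Since `s² = 1`, the two brackets tend to
`1 + π² r⁴ p / M` and `1 - κ M / (12 π² r²)`, the latter nonzero by hypothesis.
-/

open Real Filter Topology

lemma one_sub_sqrt_one_add_mul_sq_div_sq {c x : ℝ} (hx : x ≠ 0) (h : 0 ≤ 1 + c * x ^ 2) :
    (1 - √(1 + c * x ^ 2)) / x ^ 2 = -c / (1 + √(1 + c * x ^ 2)) := by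
  have hsq : √(1 + c * x ^ 2) ^ 2 = 1 + c * x ^ 2 := sq_sqrt h
  have hpos : 0 < 1 + √(1 + c * x ^ 2) := by positivity
  field_simp
  linear_combination -hsq

lemma tendsto_one_sub_sqrt_one_add_mul_sq_div_sq (c : ℝ) :
    Tendsto (fun x : ℝ => (1 - √(1 + c * x ^ 2)) / x ^ 2) (𝓝[≠] 0) (𝓝 (-(c / 2))) := by
  have hcont : ContinuousAt (fun x : ℝ => -c / (1 + √(1 + c * x ^ 2))) 0 :=
    ContinuousAt.div (by fun_prop) (by fun_prop) (by simp)
  have hlim : Tendsto (fun x : ℝ => -c / (1 + √(1 + c * x ^ 2))) (𝓝[≠] 0) (𝓝 (-(c / 2))) := by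
    have h := hcont.tendsto.mono_left (nhdsWithin_le_nhds (s := {0}ᶜ))
    convert h using 2
    norm_num
    ring
  have hnonneg : ∀ᶠ x in 𝓝 (0 : ℝ), 0 ≤ 1 + c * x ^ 2 :=
    (show ContinuousAt (fun x : ℝ => 1 + c * x ^ 2) 0 by fun_prop).eventually
      (eventually_ge_nhds (by norm_num : (0 : ℝ) < 1 + c * 0 ^ 2))
  refine hlim.congr' ?_
  filter_upwards [nhdsWithin_le_nhds hnonneg, self_mem_nhdsWithin] with x hx hx0
  exact (one_sub_sqrt_one_add_mul_sq_div_sq hx0 hx).symm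

theorem stmt_3_general (s κ r M ρ p : ℝ) (hs : s = 1 ∨ s = -1) (hκ : 0 < κ)
    (hr : 0 < r) (hM : 0 < M)
    (hden : 1 - κ * M / (12 * π ^ 2 * r ^ 2) ≠ 0) :
    Tendsto
      (fun l : ℝ =>
        -(κ * M * ρ / (12 * π ^ 2 * r ^ 3)) * (1 + p / ρ) *
          (Real.sqrt (1 + s * κ * l ^ 2 * M / (6 * π ^ 2 * r ^ 4)))⁻¹ *
          (π ^ 2 * r ^ 4 * p / M
            - 12 * s * π ^ 2 * r ^ 4 / (κ * l ^ 2 * M) *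
              (1 - Real.sqrt (1 + s * κ * l ^ 2 * M / (6 * π ^ 2 * r ^ 4)))) *
          (1 + s * (r ^ 2 / l ^ 2) *
            (1 - Real.sqrt (1 + s * κ * l ^ 2 * M / (6 * π ^ 2 * r ^ 4))))⁻¹)
      (nhdsWithin 0 (Set.Ioi 0))
      (nhds (-(κ * M * ρ / (12 * π ^ 2 * r ^ 3)) * (1 + p / ρ) *
        (1 + π ^ 2 * r ^ 4 * p / M) * (1 - κ * M / (12 * π ^ 2 * r ^ 2))⁻¹)) := by
  set c := s * κ * M / (6 * π ^ 2 * r ^ 4) with hc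
  have hs2 : s ^ 2 = 1 := by rcases hs with rfl | rfl <;> norm_num
  have hargs : ∀ l : ℝ, 1 + s * κ * l ^ 2 * M / (6 * π ^ 2 * r ^ 4) = 1 + c * l ^ 2 := by
    intro l; ring
  simp only [hargs]
  have hA : Tendsto (fun l : ℝ => √(1 + c * l ^ 2)) (𝓝[>] 0) (𝓝 1) := by
    have h := (show Continuous fun l : ℝ => √(1 + c * l ^ 2) by fun_prop).tendsto 0
    simpa using h.mono_left nhdsWithin_le_nhds
  have hf := (tendsto_one_sub_sqrt_one_add_mul_sq_div_sq c).mono_left (nhdsGT_le_nhdsNE 0)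
  have hlim_den : 1 + s * r ^ 2 * -(c / 2) = 1 - κ * M / (12 * π ^ 2 * r ^ 2) := by
    rw [hc]; field_simp; linear_combination (-(12 * κ * M)) * hs2
  have hlim_num : π ^ 2 * r ^ 4 * p / M - 12 * s * π ^ 2 * r ^ 4 / (κ * M) * -(c / 2)
      = 1 + π ^ 2 * r ^ 4 * p / M := by
    rw [hc]; field_simp; linear_combination (12 * M) * hs2
  have key := ((tendsto_const_nhds (x := -(κ * M * ρ / (12 * π ^ 2 * r ^ 3)) * (1 + p / ρ))).mul
    (hA.inv₀ one_ne_zero)).mul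
    ((tendsto_const_nhds (x := π ^ 2 * r ^ 4 * p / M)).sub
      ((tendsto_const_nhds (x := 12 * s * π ^ 2 * r ^ 4 / (κ * M))).mul hf))
    |>.mul (((tendsto_const_nhds (x := (1 : ℝ))).add
      ((tendsto_const_nhds (x := s * r ^ 2)).mul hf)).inv₀ (hlim_den ▸ hden))
  rw [hlim_den, hlim_num, inv_one, mul_one] at key
  convert key using 2 with l
  ring

/-- As the length scale `l → 0⁺`, the right-hand side `G(l)` of the
generalized five-dimensional TOV equation (se13) tends to the right-hand
side of the standard five-dimensional TOV equation (ectov02)/(A28). -/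
theorem stmt_3 (s κ r M ρ p : ℝ) (hs : s = 1 ∨ s = -1) (hκ : 0 < κ)
    (hr : 0 < r) (hM : 0 < M) (hρ : 0 < ρ)
    (hden : 1 - κ * M / (12 * π ^ 2 * r ^ 2) ≠ 0) :
    Tendsto
      (fun l : ℝ =>
        -(κ * M * ρ / (12 * π ^ 2 * r ^ 3)) * (1 + p / ρ) *
          (Real.sqrt (1 + s * κ * l ^ 2 * M / (6 * π ^ 2 * r ^ 4)))⁻¹ *
          (π ^ 2 * r ^ 4 * p / M
            - 12 * s * π ^ 2 * r ^ 4 / (κ * l ^ 2 * M) *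
              (1 - Real.sqrt (1 + s * κ * l ^ 2 * M / (6 * π ^ 2 * r ^ 4)))) *
          (1 + s * (r ^ 2 / l ^ 2) *
            (1 - Real.sqrt (1 + s * κ * l ^ 2 * M / (6 * π ^ 2 * r ^ 4))))⁻¹)
      (nhdsWithin 0 (Set.Ioi 0))
      (nhds (-(κ * M * ρ / (12 * π ^ 2 * r ^ 3)) * (1 + p / ρ) *
        (1 + π ^ 2 * r ^ 4 * p / M) * (1 - κ * M / (12 * π ^ 2 * r ^ 2))⁻¹)) :=
  stmt_3_general s κ r M ρ p hs hκ hr hM hden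
end

section
/- Let s ∈ {−1, 1}, l > 0, κ > 0, ρ₀ > 0 with 1 + s·κ·l²·ρ₀/12 > 0, and set β = √(1 + s·κ·l²·ρ₀/12) (so β > 0 and β ≠ 1). Define u(r) = 1 + s·(r²/l²)·(1 − β) and Φ(r) = −s·l² · u(r)^{−1/2} / (β·(1 − β)). Then for every r > 0 with u(r) > 0, Φ is differentiable at r with Φ′(r) = r³ / (u(r)^{3/2} · (r² + s·l²·(1 − u(r)))). -/
open Real

/-! Writing `u r = 1 + c r²` with `c = s (1 - β) / l²`, the chain rule gives
`Φ' r = -K c r / u^{3/2}` for `K = -s l² / (β (1 - β))`, i.e. `Φ' r = s² r / (β u^{3/2})`.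
Since `s² = 1`, the factor `r² + s l² (1 - u r)` of the claimed integrand collapses to `β r²`,
so both sides equal `r / (β u^{3/2})`. -/

theorem HasDerivAt.inv_sqrt {f : ℝ → ℝ} {f' x : ℝ} (hf : HasDerivAt f f' x) (hx : 0 < f x) :
    HasDerivAt (fun y => (√(f y))⁻¹) (-f' / (2 * √(f x) ^ 3)) x := by
  have hsqrt : 0 < √(f x) := Real.sqrt_pos.mpr hx
  refine ((hf.sqrt hx.ne').inv hsqrt.ne').congr_deriv ?_
  field_simp

theorem hasDerivAt_one_add_mul_sq_div_mul (a b c r : ℝ) :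
    HasDerivAt (fun x : ℝ => 1 + a * (x ^ 2 / b) * c) (2 * a * c * r / b) r := by
  refine (((((hasDerivAt_pow 2 r).div_const b).const_mul a).mul_const c).const_add 1).congr_deriv ?_
  ring

theorem sqrt_one_add_ne_one {a : ℝ} (ha : a ≠ 0) : √(1 + a) ≠ 1 := by
  rw [Ne, Real.sqrt_eq_one]
  simpa using ha

/-- Evaluation of the integral appearing in equation (se27) for the
constant-density interior solution, where `u(r) = e^{−2g(r)}` is given by
equation (se23): the antiderivative `Φ` of
`r³ / (u^{3/2}·(r² + s·l²·(1 − u)))`. -/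
theorem stmt_6 (s l κ ρ₀ : ℝ) (hs : s = 1 ∨ s = -1) (hl : 0 < l)
    (hκ : 0 < κ) (hρ₀ : 0 < ρ₀) (hpos : 0 < 1 + s * κ * l ^ 2 * ρ₀ / 12)
    (β : ℝ) (hβ : β = Real.sqrt (1 + s * κ * l ^ 2 * ρ₀ / 12))
    (u Φ : ℝ → ℝ)
    (hu : ∀ r : ℝ, u r = 1 + s * (r ^ 2 / l ^ 2) * (1 - β))
    (hΦ : ∀ r : ℝ, Φ r = -s * l ^ 2 * (Real.sqrt (u r))⁻¹ / (β * (1 - β))) :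
    ∀ r > (0 : ℝ), 0 < u r → HasDerivAt Φ
      (r ^ 3 / (Real.sqrt (u r) ^ 3 * (r ^ 2 + s * l ^ 2 * (1 - u r)))) r := by
  intro r hr hur
  have hs2 : s ^ 2 = 1 := by rcases hs with rfl | rfl <;> norm_num
  have hβ0 : β ≠ 0 := (hβ ▸ Real.sqrt_pos.mpr hpos).ne'
  have hβ1 : 1 - β ≠ 0 := by
    refine sub_ne_zero.mpr (hβ ▸ (sqrt_one_add_ne_one ?_).symm)
    have hs0 : s ≠ 0 := by rcases hs with rfl | rfl <;> norm_num
    positivity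
  have hdu : HasDerivAt u (2 * s * (1 - β) * r / l ^ 2) r := by
    rw [funext hu]; exact hasDerivAt_one_add_mul_sq_div_mul s (l ^ 2) (1 - β) r
  have hdΦ := ((hdu.inv_sqrt hur).const_mul (-s * l ^ 2)).div_const (β * (1 - β))
  have hcollapse : r ^ 2 + s * l ^ 2 * (1 - u r) = β * r ^ 2 := by
    rw [hu]; field_simp; linear_combination -(r ^ 2 * (1 - β)) * hs2
  rw [funext hΦ]
  refine hdΦ.congr_deriv ?_
  rw [hcollapse]
  field_simp
  linear_combination hs2
end

section
/- Let A ∈ ℝ and let b, c : ℕ → ℝ be coefficient sequences with c(0) = c(1) = 0. Let x ∈ ℝ and suppose e^{x} is strictly less than the radius of convergence of the power series Σₙ b(n)·zⁿ, and e^{−x} is strictly less than the radius of convergence of the power series Σₘ c(m)·zᵐ. Define h_r(f) = Σₙ b(n)·e^{n·f} + Σ_{m≥2} c(m)·e^{−m·f} and h_t(f) = A·e^{−f} + Σₙ (b(n)/(n+1))·e^{n·f} − Σ_{m≥2} (c(m)/(m−1))·e^{−m·f}, both defined in a neighborhood of x. Then h_t is differentiable at x and h_t′(x) + h_t(x) =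 h_r(x). -/
/-!
Each of the three pieces of `h_t` solves the equation on its own:
`(A e^{-f})' + A e^{-f} = 0`, and termwise `(e^{nf}/(n+1))' + e^{nf}/(n+1) = e^{nf}` and
`(e^{-mf}/(m-1))' + e^{-mf}/(m-1) = -e^{-mf}`. Termwise differentiation is legitimate because,
for `s` strictly between `e^{±x}` and the radius of convergence, the differentiated series are
dominated on the half-line `{y | e^{±y} < s}` by a multiple of `Σ |coefficient| sⁿ`: the factor
`n` produced by differentiation is absorbed by the division by `n + 1`, resp. `m - 1`.
-/

open Real

theorem exists_lt_summable_abs_mul_pow {a : ℕ → ℝ} {r : ℝ} (hr₀ : 0 ≤ r)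
    (hr : ENNReal.ofReal r < (FormalMultilinearSeries.ofScalars ℝ a).radius) :
    ∃ s : ℝ, r < s ∧ Summable fun n => |a n| * s ^ n := by
  obtain ⟨s, hrs, hs⟩ := ENNReal.lt_iff_exists_nnreal_btwn.mp hr
  refine ⟨s, (ENNReal.ofReal_lt_coe_iff hr₀).mp hrs, ?_⟩
  simpa [FormalMultilinearSeries.ofScalars_norm] using
    (FormalMultilinearSeries.ofScalars ℝ a).summable_norm_mul_pow hs

theorem summable_mul_exp_nat_mul {a : ℕ → ℝ} {x s : ℝ} (hs : exp x ≤ s)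
    (ha : Summable fun n => |a n| * s ^ n) : Summable fun n : ℕ => a n * exp (n * x) :=
  ha.of_norm_bounded fun n => by
    rw [norm_mul, norm_of_nonneg (exp_pos _).le, exp_nat_mul, norm_eq_abs]
    gcongr

theorem summable_of_summable_succ_mul {f : ℕ → ℝ} (hf : ∀ n, 0 ≤ f n)
    (h : Summable fun n : ℕ => (n + 1) * f n) : Summable f :=
  h.of_nonneg_of_le hf fun n => le_mul_of_one_le_left (hf n) (by simp)

theorem hasDerivAt_tsum_mul_exp_nat_mul {a : ℕ → ℝ} {x s : ℝ} (hs : exp x < s)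
    (ha : Summable fun n : ℕ => (n + 1) * (|a n| * s ^ n)) :
    HasDerivAt (fun y => ∑' n : ℕ, a n * exp (n * y)) (∑' n : ℕ, n * a n * exp (n * x)) x := by
  have hs₀ : 0 < s := (exp_pos x).trans hs
  have hexp_le {y : ℝ} (hy : y ∈ Set.Iio (log s)) (n : ℕ) : exp (n * y) ≤ s ^ n := by
    rw [exp_nat_mul]
    exact pow_le_pow_left₀ (exp_pos y).le ((lt_log_iff_exp_lt hs₀).mp hy).le n
  have hx : x ∈ Set.Iio (log s) := (lt_log_iff_exp_lt hs₀).mpr hs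
  refine hasDerivAt_tsum_of_isPreconnected ha isOpen_Iio isPreconnected_Iio
    (g' := fun n y => n * a n * exp (n * y)) (fun n y _ => ?_) (fun n y hy => ?_) hx
    (summable_mul_exp_nat_mul hs.le (summable_of_summable_succ_mul (fun n => by positivity) ha)) hx
  · exact (((hasDerivAt_id' y).const_mul (n : ℝ)).exp.const_mul (a n)).congr_deriv (by ring)
  · rw [norm_mul, norm_mul, norm_of_nonneg (exp_pos _).le, Real.norm_natCast, norm_eq_abs,
      ← mul_assoc]
    gcongr ?_ * _ * ?_
    · linarith
    · exact hexp_le hy n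

theorem succ_mul_abs_div_sub_one_le (n : ℕ) (c : ℝ) : ((n : ℝ) + 1) * |c / (n - 1)| ≤ 3 * |c| := by
  rcases n with _ | _ | m
  · simp [abs_div]; linarith [abs_nonneg c]
  · simp
  · have : (((m + 2 : ℕ) : ℝ) - 1) = m + 1 := by push_cast; ring
    rw [this, abs_div, abs_of_pos (by positivity : (0:ℝ) < m + 1), ← mul_div_assoc,
      div_le_iff₀ (by positivity)]
    push_cast
    nlinarith [abs_nonneg c]

theorem hasDerivAt_tsum_div_succ_mul_exp {b : ℕ → ℝ} {x : ℝ}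
    (hb : ENNReal.ofReal (exp x) < (FormalMultilinearSeries.ofScalars ℝ b).radius) :
    HasDerivAt (fun y => ∑' n : ℕ, b n / (n + 1) * exp (n * y))
      ((∑' n : ℕ, b n * exp (n * x)) - ∑' n : ℕ, b n / (n + 1) * exp (n * x)) x := by
  obtain ⟨s, hxs, hbs⟩ := exists_lt_summable_abs_mul_pow (exp_pos x).le hb
  have hs₀ : 0 < s := (exp_pos x).trans hxs
  have hB : Summable fun n : ℕ => ((n : ℝ) + 1) * (|b n / (n + 1)| * s ^ n) :=
    hbs.congr fun n => by
      rw [abs_div, abs_of_pos (by positivity : (0 : ℝ) < n + 1)]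
      field_simp
  refine (hasDerivAt_tsum_mul_exp_nat_mul hxs hB).congr_deriv ?_
  rw [← (summable_mul_exp_nat_mul hxs.le hbs).tsum_sub (summable_mul_exp_nat_mul hxs.le
    (summable_of_summable_succ_mul (fun n => by positivity) hB))]
  congr 1 with n
  field_simp
  ring

theorem hasDerivAt_tsum_div_sub_one_mul_exp_neg {c : ℕ → ℝ} {x : ℝ} (hc1 : c 1 = 0)
    (hc : ENNReal.ofReal (exp (-x)) < (FormalMultilinearSeries.ofScalars ℝ c).radius) :
    HasDerivAt (fun y => ∑' m : ℕ, c m / (m - 1) * exp (-(m * y)))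
      (-(∑' m : ℕ, c m * exp (-(m * x))) - ∑' m : ℕ, c m / (m - 1) * exp (-(m * x))) x := by
  obtain ⟨s, hxs, hcs⟩ := exists_lt_summable_abs_mul_pow (exp_pos (-x)).le hc
  have hs₀ : 0 < s := (exp_pos (-x)).trans hxs
  have hC : Summable fun n : ℕ => ((n : ℝ) + 1) * (|c n / (n - 1)| * s ^ n) :=
    (hcs.mul_left 3).of_nonneg_of_le (fun n => by positivity) fun n => by
      rw [← mul_assoc, ← mul_assoc]
      exact mul_le_mul_of_nonneg_right (succ_mul_abs_div_sub_one_le n (c n)) (by positivity)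
  have hcx := summable_mul_exp_nat_mul hxs.le hcs
  have hCx := summable_mul_exp_nat_mul hxs.le
    (summable_of_summable_succ_mul (fun n => by positivity) hC)
  simp only [← mul_neg] at hcx hCx ⊢
  refine ((hasDerivAt_tsum_mul_exp_nat_mul hxs hC).comp x (hasDerivAt_neg x)).congr_deriv ?_
  rw [mul_neg_one, ← neg_add', ← hcx.tsum_add hCx]
  congr 2 with n
  -- `c 1 / (1 - 1) = 0` in Lean, so the `m = 1` term needs `c 1 = 0`.
  rcases eq_or_ne n 1 with rfl | hn
  · simp [hc1]
  · have : (n : ℝ) - 1 ≠ 0 := sub_ne_zero.mpr (by exact_mod_cast hn)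
    field_simp
    ring

theorem stmt_10_general (A : ℝ) (b c : ℕ → ℝ) (hc1 : c 1 = 0) (x : ℝ)
    (hb : ENNReal.ofReal (Real.exp x) < (FormalMultilinearSeries.ofScalars ℝ b).radius)
    (hc : ENNReal.ofReal (Real.exp (-x)) < (FormalMultilinearSeries.ofScalars ℝ c).radius)
    (h_r h_t : ℝ → ℝ)
    (hhr : ∀ f : ℝ, h_r f =
      (∑' n : ℕ, b n * Real.exp (n * f)) + ∑' m : ℕ, c m * Real.exp (-(m * f)))
    (hht : ∀ f : ℝ, h_t f = A * Real.exp (-f)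
      + (∑' n : ℕ, b n / (n + 1) * Real.exp (n * f))
      - ∑' m : ℕ, c m / (m - 1) * Real.exp (-(m * f))) :
    DifferentiableAt ℝ h_t x ∧ deriv h_t x + h_t x = h_r x := by
  have hA : HasDerivAt (fun y => A * exp (-y)) (-(A * exp (-x))) x :=
    ((hasDerivAt_neg x).exp.const_mul A).congr_deriv (by ring)
  have H := ((hA.add (hasDerivAt_tsum_div_succ_mul_exp hb)).sub
    (hasDerivAt_tsum_div_sub_one_mul_exp_neg hc1 hc)).congr_of_eventuallyEq (.of_forall hht)
  refine ⟨H.differentiableAt, ?_⟩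
  rw [H.deriv, hht, hhr]
  ring

/-- Solution of the linear first-order inhomogeneous ODE `ḣ_t + h_t = h_r`
(equation (edohomo)) under the ansatz
`h_r(f) = Σₙ Bₙ e^{nf} + Σ_{m≥2} Cₘ e^{−mf}`: the function
`h_t(f) = A·e^{−f} + Σₙ Bₙ e^{nf}/(n+1) − Σ_{m≥2} Cₘ e^{−mf}/(m−1)` is
differentiable and satisfies the ODE. Since `c 0 = c 1 = 0`, the sums over
all `m : ℕ` coincide with the sums over `m ≥ 2`. -/
theorem stmt_10 (A : ℝ) (b c : ℕ → ℝ) (hc0 : c 0 = 0) (hc1 : c 1 = 0) (x : ℝ)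
    (hb : ENNReal.ofReal (Real.exp x) < (FormalMultilinearSeries.ofScalars ℝ b).radius)
    (hc : ENNReal.ofReal (Real.exp (-x)) < (FormalMultilinearSeries.ofScalars ℝ c).radius)
    (h_r h_t : ℝ → ℝ)
    (hhr : ∀ f : ℝ, h_r f =
      (∑' n : ℕ, b n * Real.exp (n * f)) + ∑' m : ℕ, c m * Real.exp (-(m * f)))
    (hht : ∀ f : ℝ, h_t f = A * Real.exp (-f)
      + (∑' n : ℕ, b n / (n + 1) * Real.exp (n * f))
      - ∑' m : ℕ, c m / (m - 1) * Real.exp (-(m * f))) :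
    DifferentiableAt ℝ h_t x ∧ deriv h_t x + h_t x = h_r x :=
  stmt_10_general A b c hc1 x hb hc h_r h_t hhr hht
end
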